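/- Let s ∈ ℕ, d = 2s, and let p₀, …, p_d ∈ ℂ. Define p : ℂ → ℂ by p(z) = Σ_{k=0}^d p_k·z^k·conj(z)^{d−k}, and assume p is real-valued (Im p(z) = 0 for all z ∈ ℂ). Suppose there is δ > 0 such that p(z) ≥ 0 for all z ∈ ℂ with |z| < δ, and suppose the middle coefficient vanishes: p_s = 0. Then p_k = 0 for every k = 0, …, d; in particular p vanishes identically. -/

import Mathlib

/-!
On the circle `|z| = t`, `p (t u) = t ^ (2s) * ∑ k, p_k u ^ (2k - 2s)` is a trigonometric polynomial
whose mean value is `t ^ (2s) * p_s = 0`. Sampling at the `(4s+1)`-st roots of unity, where the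
frequencies `2k - 2s` stay pairwise distinct, this mean is an average of nonnegative values, so `p`
vanishes at every sample; discrete Fourier inversion then recovers each `p_k` from these samples as `0`.
-/

open Finset ComplexConjugate

theorem IsPrimitiveRoot.geom_sum_zpow {K : Type*} [Field K] {ζ : K} {N : ℕ}
    (hζ : IsPrimitiveRoot ζ N) (m : ℤ) :
    ∑ j ∈ range N, (ζ ^ m) ^ j = if (N : ℤ) ∣ m then (N : K) else 0 := by
  split_ifs with hm
  · simp [(hζ.zpow_eq_one_iff_dvd m).mpr hm]
  · have hζm : (ζ ^ m) ^ N = 1 := by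
      rw [← zpow_natCast, ← zpow_mul, mul_comm, zpow_mul, hζ.zpow_eq_one, one_zpow]
    rw [geom_sum_eq (mt (hζ.zpow_eq_one_iff_dvd m).mp hm), hζm, sub_self, zero_div]

/-- Discrete Fourier inversion on the `N`-th roots of unity. -/
theorem IsPrimitiveRoot.sum_sum_mul_zpow_mul_zpow_neg {K ι : Type*} [Field K] {ζ : K} {N : ℕ}
    (hζ : IsPrimitiveRoot ζ N) {S : Finset ι} (a : ι → K) (e : ι → ℤ) {i₀ : ι} (hi₀ : i₀ ∈ S)
    (he : ∀ i ∈ S, (N : ℤ) ∣ e i - e i₀ → i = i₀) :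
    ∑ j ∈ range N, (∑ i ∈ S, a i * (ζ ^ j) ^ e i) * (ζ ^ j) ^ (-e i₀) = N * a i₀ := by
  rcases N.eq_zero_or_pos with rfl | hN
  · simp
  have hζ0 : ζ ≠ 0 := hζ.ne_zero hN.ne'
  have hterm : ∀ i j, a i * (ζ ^ j) ^ e i * (ζ ^ j) ^ (-e i₀) = a i * (ζ ^ (e i - e i₀)) ^ j := by
    intro i j
    rw [mul_assoc, ← zpow_add₀ (pow_ne_zero j hζ0), ← sub_eq_add_neg, ← zpow_natCast,
      ← zpow_natCast, ← zpow_mul, ← zpow_mul, mul_comm (j : ℤ)]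
  simp_rw [sum_mul, hterm]
  rw [sum_comm, sum_eq_single_of_mem i₀ hi₀]
  · simp [mul_comm]
  · intro i hi hne
    rw [← mul_sum, hζ.geom_sum_zpow, if_neg (mt (he i hi) hne), mul_zero]

theorem sum_mul_pow_mul_conj_pow_ofReal_mul {u : ℂ} (hu : ‖u‖ = 1) (t : ℝ) (d : ℕ) (c : ℕ → ℂ) :
    ∑ k ∈ range (d + 1), c k * ((t : ℂ) * u) ^ k * conj ((t : ℂ) * u) ^ (d - k)
      = ∑ k ∈ range (d + 1), (t : ℂ) ^ d * c k * u ^ (2 * (k : ℤ) - d) := by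
  have hu0 : u ≠ 0 := norm_ne_zero_iff.mp (by simp [hu])
  refine sum_congr rfl fun k hk => ?_
  have hk : k ≤ d := Nat.lt_succ_iff.mp (mem_range.mp hk)
  have hexp : 2 * (k : ℤ) - d = k - (d - k : ℕ) := by push_cast [Nat.cast_sub hk]; ring
  rw [map_mul, Complex.conj_ofReal, ← RCLike.inv_eq_conj hu, hexp, zpow_sub₀ hu0, zpow_natCast,
    zpow_natCast, ← Nat.add_sub_cancel' hk, pow_add, Nat.add_sub_cancel_left, mul_pow, mul_pow,
    inv_pow, div_eq_mul_inv]
  ring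

theorem eq_of_dvd_two_mul_sub {d k k' : ℕ} (hk : k ≤ d) (hk' : k' ≤ d)
    (h : ((2 * d + 1 : ℕ) : ℤ) ∣ (2 * (k : ℤ) - d) - (2 * k' - d)) : k = k' := by
  have := Int.eq_zero_of_abs_lt_dvd h (by rw [abs_lt]; push_cast; omega)
  omega

/-- for a real-valued homogeneous polynomial `p(z) = Σ_k p_k z^k conj(z)^{2s-k}`
of even degree `d = 2s` that is nonnegative near `0`, if the middle coefficient `p_s`
vanishes then `p` vanishes identically (all coefficients are `0`). -/
theorem boundary_jets_stmt17 (s : ℕ) (pc : ℕ → ℂ)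
    (p : ℂ → ℂ)
    (hp : ∀ z : ℂ, p z = ∑ k ∈ Finset.range (2 * s + 1),
      pc k * z ^ k * (starRingEnd ℂ z) ^ (2 * s - k))
    (hreal : ∀ z : ℂ, (p z).im = 0)
    (δ : ℝ) (hδ : 0 < δ)
    (hpos : ∀ z : ℂ, ‖z‖ < δ → 0 ≤ (p z).re)
    (hmid : pc s = 0) :
    ∀ k ≤ 2 * s, pc k = 0 := by
  intro k₀ hk₀
  set N := 2 * (2 * s) + 1
  have hN : N ≠ 0 := by omega
  obtain ⟨ω, hω⟩ : ∃ ω : ℂ, IsPrimitiveRoot ω N :=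
    ⟨_, Complex.isPrimitiveRoot_exp N hN⟩
  have hω_norm (j : ℕ) : ‖ω ^ j‖ = 1 := by
    rw [norm_pow, Complex.norm_eq_one_of_pow_eq_one hω.pow_eq_one hN, one_pow]
  set t : ℝ := δ / 2
  have ht : 0 < t := half_pos hδ
  have hnorm (j : ℕ) : ‖(t : ℂ) * ω ^ j‖ < δ := by
    rw [norm_mul, hω_norm, mul_one, Complex.norm_real, Real.norm_of_nonneg ht.le]
    exact half_lt_self hδ
  set a : ℕ → ℂ := fun k => (t : ℂ) ^ (2 * s) * pc k
  set e : ℕ → ℤ := fun k => 2 * (k : ℤ) - (2 * s : ℕ)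
  have hfourier : ∀ k ≤ 2 * s,
      ∑ j ∈ range N, p (t * ω ^ j) * (ω ^ j) ^ (-e k) = N * a k := fun k hk => by
    simp_rw [hp, sum_mul_pow_mul_conj_pow_ofReal_mul (hω_norm _)]
    refine hω.sum_sum_mul_zpow_mul_zpow_neg a e (mem_range.mpr (by omega)) fun i hi h => ?_
    exact eq_of_dvd_two_mul_sub (Nat.lt_succ_iff.mp (mem_range.mp hi)) hk h
  have hsum : ∑ j ∈ range N, p (t * ω ^ j) = 0 := by
    simpa [e, a, hmid] using hfourier s (by omega)
  have hvanish : ∀ j ∈ range N, p (t * ω ^ j) = 0 := by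
    have hre := (sum_eq_zero_iff_of_nonneg fun j _ => hpos _ (hnorm j)).mp
      (by rw [← Complex.re_sum, hsum, Complex.zero_re])
    exact fun j hj => Complex.ext (hre j hj) (hreal _)
  have h := hfourier k₀ hk₀
  rw [sum_eq_zero fun j hj => by rw [hvanish j hj, zero_mul]] at h
  simpa [a, ht.ne'] using h.symm
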